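/- (Maximizers correspond exactly to shock-free backward characteristics.) For every (x₀,t₀) ∈ ℝ × (0,∞) and every c ∈ ℝ: c ∈ 𝒰(x₀,t₀) if and only if 𝒰(x₀ + (t − t₀)·f'(c), t) = {c} for every t ∈ (0, t₀). -/

import Mathlib

open MeasureTheory Filter Set

noncomputable def eFun (f φ : ℝ → ℝ) (u x t : ℝ) : ℝ :=
  t * (∫ s in (0:ℝ)..u, deriv (deriv f) s * (φ (x - t * deriv f s) - s))

def maxSet (f φ : ℝ → ℝ) (x t : ℝ) : Set ℝ :=
  {w : ℝ | ∀ v : ℝ, eFun f φ v x t ≤ eFun f φ w x t}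

noncomputable def uPlus (f φ : ℝ → ℝ) (x t : ℝ) : ℝ := sInf (maxSet f φ x t)

noncomputable def uMinus (f φ : ℝ → ℝ) (x t : ℝ) : ℝ := sSup (maxSet f φ x t)

open Topology

/-! The substitution `y = x - t f'(s)` turns `E` into the Lax–Oleinik functional:
`E(v) - E(c) = ∫_{x - t f'(v)}^{x - t f'(c)} φ - t ∫_c^v s f''(s) ds`, and `∫ s f''(s) ds`, read
as a function of `p = f'(s)`, is the Legendre transform of `f`, strictly convex because `f'' > 0`
almost everywhere. If `c` maximizes at `(x₀, t₀)` and `(x, t)`, `t < t₀`, lies on its backward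
characteristic, a competitor `v` at `(x, t)` has foot `x - t f'(v) = x₀ - t₀ f'(w)` for some `w`
between `c` and `v`; comparing with `w` at `(x₀, t₀)` cancels the `φ`-terms, and strict convexity
makes `v` strictly worse than `c`. Conversely `E(v) - E(c)` along the characteristic is continuous
in `t`, so the inequality `≤ 0` for `t < t₀` persists at `t = t₀`. -/

theorem intervalIntegral_pos_of_ae_pos_on {h : ℝ → ℝ} {a b : ℝ} (hab : a < b)
    (hint : IntervalIntegrable h volume a b) (hpos : ∀ᵐ s, s ∈ Ioo a b → 0 < h s) :
    0 < ∫ s in a..b, h s := by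
  have hIoo : ∀ᵐ s ∂volume.restrict (Ioo a b), 0 < h s :=
    (ae_restrict_iff' measurableSet_Ioo).mpr hpos
  have hnonneg : 0 ≤ᵐ[volume.restrict (uIoc a b)] h := by
    rw [uIoc_of_le hab.le]
    exact ae_restrict_of_ae_eq_of_ae_restrict Ioo_ae_eq_Ioc (hIoo.mono fun s hs => hs.le)
  rw [intervalIntegral.integral_pos_iff_support_of_nonneg_ae' hnonneg hint]
  refine ⟨hab, ((Measure.measure_Ioo_pos _).mpr hab).trans_le (measure_mono_ae ?_)⟩
  filter_upwards [hpos] with s hs hsIoo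
  exact ⟨(hs hsIoo).ne', Ioo_subset_Ioc_self hsIoo⟩

section PositiveDensity

variable {F ρ : ℝ → ℝ}

theorem strictMono_of_hasDerivAt_of_ae_pos (hF : ∀ s, HasDerivAt F (ρ s) s)
    (hρ : Continuous ρ) (hpos : ∀ᵐ s, 0 < ρ s) : StrictMono F := by
  intro a b hab
  have hint : 0 < ∫ s in a..b, ρ s :=
    intervalIntegral_pos_of_ae_pos_on hab (hρ.intervalIntegrable a b)
      (hpos.mono fun s hs _ => hs)
  rw [intervalIntegral.integral_eq_sub_of_hasDerivAt (fun s _ => hF s)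
    (hρ.intervalIntegrable a b)] at hint
  linarith

theorem integral_mul_sub_left_pos (hρ : Continuous ρ) (hpos : ∀ᵐ s, 0 < ρ s) {w v : ℝ}
    (hwv : w ≠ v) : 0 < ∫ s in w..v, ρ s * (s - w) := by
  have hint : ∀ a b, IntervalIntegrable (fun s => ρ s * (s - w)) volume a b :=
    fun a b => (hρ.mul (continuous_id.sub continuous_const)).intervalIntegrable a b
  rcases hwv.lt_or_gt with hlt | hgt
  · exact intervalIntegral_pos_of_ae_pos_on hlt (hint w v)
      (hpos.mono fun s hs hsI => mul_pos hs (sub_pos.mpr hsI.1))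
  · rw [intervalIntegral.integral_symm, ← intervalIntegral.integral_neg]
    exact intervalIntegral_pos_of_ae_pos_on hgt (hint v w).neg
      (hpos.mono fun s hs hsI => by nlinarith [hsI.2])

theorem integral_mul_sub_left_nonneg (hρ : Continuous ρ) (hpos : ∀ᵐ s, 0 < ρ s) (w c : ℝ) :
    0 ≤ ∫ s in w..c, ρ s * (s - w) := by
  rcases eq_or_ne w c with rfl | hwc
  · simp
  · exact (integral_mul_sub_left_pos hρ hpos hwc).le

theorem integral_mul_id_eq (hF : ∀ s, HasDerivAt F (ρ s) s) (hρ : Continuous ρ) (w a b : ℝ) :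
    ∫ s in a..b, ρ s * s = (∫ s in a..b, ρ s * (s - w)) + w * (F b - F a) := by
  rw [← intervalIntegral.integral_eq_sub_of_hasDerivAt (fun s _ => hF s)
      (hρ.intervalIntegrable a b), ← intervalIntegral.integral_const_mul,
    ← intervalIntegral.integral_add
      (hρ.mul (continuous_id.sub continuous_const) |>.intervalIntegrable (μ := volume)
        (u := fun s => ρ s * (s - w)) a b)
      ((continuous_const.mul hρ).intervalIntegrable (u := fun s => w * ρ s) a b)]
  exact intervalIntegral.integral_congr fun s _ => by ring

/-- Strict convexity of the Legendre transform `p ↦ ∫ s ρ(s) ds` (with `p = F s`) on the segment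
from `F c` to `F v`, at the point `F w` dividing it in the ratio `t / t₀`. -/
theorem mul_integral_mul_id_lt (hF : ∀ s, HasDerivAt F (ρ s) s) (hρ : Continuous ρ)
    (hpos : ∀ᵐ s, 0 < ρ s) {t t₀ c v w : ℝ} (ht : 0 < t) (htt₀ : t < t₀) (hwv : w ≠ v)
    (hw : t₀ * (F w - F c) = t * (F v - F c)) :
    t₀ * ∫ s in c..w, ρ s * s < t * ∫ s in c..v, ρ s * s := by
  have hsplit : ∫ s in c..v, ρ s * (s - w)
      = (∫ s in c..w, ρ s * (s - w)) + ∫ s in w..v, ρ s * (s - w) :=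
    (intervalIntegral.integral_add_adjacent_intervals
      ((hρ.mul (continuous_id.sub continuous_const)).intervalIntegrable c w)
      ((hρ.mul (continuous_id.sub continuous_const)).intervalIntegrable w v)).symm
  rw [integral_mul_id_eq hF hρ w, integral_mul_id_eq hF hρ w, hsplit,
    intervalIntegral.integral_symm w c]
  have hv := integral_mul_sub_left_pos hρ hpos hwv
  have hc := integral_mul_sub_left_nonneg hρ hpos w c
  nlinarith [mul_pos ht hv, mul_nonneg (sub_nonneg.mpr htt₀.le) hc, congrArg (w * ·) hw]

theorem mul_integral_mul_comp_sub_mul (hF : ∀ s, HasDerivAt F (ρ s) s) (hρ : ∀ s, 0 ≤ ρ s)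
    {t : ℝ} (ht : 0 ≤ t) (φ : ℝ → ℝ) (x a b : ℝ) :
    t * ∫ s in a..b, ρ s * φ (x - t * F s) = ∫ y in (x - t * F b)..(x - t * F a), φ y := by
  have hFc : Continuous F := continuous_iff_continuousAt.mpr fun s => (hF s).continuousAt
  have hsubst := intervalIntegral.integral_comp_mul_deriv_of_deriv_nonpos (g := φ)
    (a := a) (b := b) (f := fun s => x - t * F s) (f' := fun s => -(t * ρ s))
    (continuous_const.sub (continuous_const.mul hFc)).continuousOn
    (fun s _ => ((hF s).const_mul t).const_sub x)
    (fun s _ => neg_nonpos.mpr (mul_nonneg ht (hρ s)))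
  rw [intervalIntegral.integral_symm (x - t * F a), ← hsubst,
    ← intervalIntegral.integral_const_mul, ← intervalIntegral.integral_neg]
  exact intervalIntegral.integral_congr fun s _ => by simp only [Function.comp_apply]; ring

theorem intervalIntegrable_mul_comp_sub_mul (hF : ∀ s, HasDerivAt F (ρ s) s)
    (hρ : ∀ s, 0 ≤ ρ s) {φ : ℝ → ℝ} (hφ : ∀ a b, IntervalIntegrable φ volume a b) {t : ℝ}
    (ht : 0 < t) (x a b : ℝ) :
    IntervalIntegrable (fun s => ρ s * φ (x - t * F s)) volume a b := by
  have hFc : Continuous F := continuous_iff_continuousAt.mpr fun s => (hF s).continuousAt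
  have hcomp := (intervalIntegral.integrable_comp_mul_deriv_iff_of_deriv_nonpos (g := φ)
    (a := a) (b := b) (f := fun s => x - t * F s) (f' := fun s => -(t * ρ s))
    (continuous_const.sub (continuous_const.mul hFc)).continuousOn
    (fun s _ => ((hF s).const_mul t).const_sub x)
    (fun s _ => neg_nonpos.mpr (mul_nonneg ht.le (hρ s)))).mpr (hφ _ _)
  refine (hcomp.const_mul (-t⁻¹)).congr fun s _ => ?_
  simp only [Function.comp_apply]
  field_simp

end PositiveDensity

section LaxOleinik

variable {f φ : ℝ → ℝ}

theorem ContDiff.hasDerivAt_deriv_two (hf : ContDiff ℝ 2 f) (s : ℝ) :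
    HasDerivAt (deriv f) (deriv (deriv f) s) s :=
  (hf.differentiable_deriv_two s).hasDerivAt

theorem ContDiff.continuous_deriv_deriv_two (hf : ContDiff ℝ 2 f) :
    Continuous (deriv (deriv f)) :=
  (hf.deriv' (n := 1)).continuous_deriv_one

theorem eFun_eq (hf : ContDiff ℝ 2 f) (hconv : ∀ u, 0 ≤ deriv (deriv f) u)
    (hφ : ∀ a b, IntervalIntegrable φ volume a b) {t : ℝ} (ht : 0 < t) (u x : ℝ) :
    eFun f φ u x t = (∫ y in (x - t * deriv f u)..(x - t * deriv f 0), φ y)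
      - t * ∫ s in (0:ℝ)..u, deriv (deriv f) s * s := by
  have hρ := hf.continuous_deriv_deriv_two
  simp only [eFun, mul_sub]
  rw [intervalIntegral.integral_sub
      (intervalIntegrable_mul_comp_sub_mul hf.hasDerivAt_deriv_two hconv hφ ht x 0 u)
      ((by fun_prop : Continuous fun s => deriv (deriv f) s * s).intervalIntegrable 0 u),
    mul_sub, mul_integral_mul_comp_sub_mul hf.hasDerivAt_deriv_two hconv ht.le]

theorem eFun_sub_eFun (hf : ContDiff ℝ 2 f) (hconv : ∀ u, 0 ≤ deriv (deriv f) u)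
    (hφ : ∀ a b, IntervalIntegrable φ volume a b) {t : ℝ} (ht : 0 < t) (x c v : ℝ) :
    eFun f φ v x t - eFun f φ c x t
      = (∫ y in (x - t * deriv f v)..(x - t * deriv f c), φ y)
        - t * ∫ s in c..v, deriv (deriv f) s * s := by
  have hρ := hf.continuous_deriv_deriv_two
  have hint : ∀ a b, IntervalIntegrable (fun s => deriv (deriv f) s * s) volume a b :=
    (by fun_prop : Continuous fun s => deriv (deriv f) s * s).intervalIntegrable
  rw [eFun_eq hf hconv hφ ht, eFun_eq hf hconv hφ ht,
    ← intervalIntegral.integral_add_adjacent_intervals (hφ _ (x - t * deriv f c)) (hφ _ _),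
    ← intervalIntegral.integral_add_adjacent_intervals (hint 0 c) (hint c v)]
  ring

theorem eFun_lt_of_mem_maxSet (hf : ContDiff ℝ 2 f) (hconv : ∀ u, 0 ≤ deriv (deriv f) u)
    (hpos : ∀ᵐ u, 0 < deriv (deriv f) u) (hφ : ∀ a b, IntervalIntegrable φ volume a b)
    {x₀ t₀ c t v : ℝ} (hc : c ∈ maxSet f φ x₀ t₀) (ht : t ∈ Ioo 0 t₀) (hv : v ≠ c) :
    eFun f φ v (x₀ + (t - t₀) * deriv f c) t < eFun f φ c (x₀ + (t - t₀) * deriv f c) t := by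
  obtain ⟨ht0, htt₀⟩ := ht
  have ht₀ : 0 < t₀ := ht0.trans htt₀
  have hmono := strictMono_of_hasDerivAt_of_ae_pos hf.hasDerivAt_deriv_two
    hf.continuous_deriv_deriv_two hpos
  have hseg : (1 - t / t₀) * deriv f c + t / t₀ * deriv f v ∈ uIcc (deriv f c) (deriv f v) := by
    rw [← segment_eq_uIcc]
    exact ⟨1 - t / t₀, t / t₀, by rw [sub_nonneg, div_le_one ht₀]; exact htt₀.le,
      by positivity, by ring, rfl⟩
  obtain ⟨w, -, hw⟩ := intermediate_value_uIcc (hf.continuous_deriv one_le_two).continuousOn hseg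
  have hwc : t₀ * (deriv f w - deriv f c) = t * (deriv f v - deriv f c) := by
    rw [hw]; field_simp; ring
  have hwv : w ≠ v := by
    rintro rfl
    have hzero : (t₀ - t) * (deriv f w - deriv f c) = 0 := by linarith
    exact hv (hmono.injective (sub_eq_zero.mp
      ((mul_eq_zero.mp hzero).resolve_left (sub_ne_zero.mpr htt₀.ne'))))
  have hlt := mul_integral_mul_id_lt hf.hasDerivAt_deriv_two hf.continuous_deriv_deriv_two hpos
    ht0 htt₀ hwv hwc
  have hdiff := eFun_sub_eFun hf hconv hφ ht0 (x₀ + (t - t₀) * deriv f c) c v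
  have hdiff₀ := eFun_sub_eFun hf hconv hφ ht₀ x₀ c w
  rw [show x₀ + (t - t₀) * deriv f c - t * deriv f c = x₀ - t₀ * deriv f c by ring,
    show x₀ + (t - t₀) * deriv f c - t * deriv f v = x₀ - t₀ * deriv f w by
      linear_combination hwc] at hdiff
  linarith [hc w]

theorem maxSet_eq_singleton_of_mem_maxSet (hf : ContDiff ℝ 2 f)
    (hconv : ∀ u, 0 ≤ deriv (deriv f) u) (hpos : ∀ᵐ u, 0 < deriv (deriv f) u)
    (hφ : ∀ a b, IntervalIntegrable φ volume a b) {x₀ t₀ c t : ℝ} (hc : c ∈ maxSet f φ x₀ t₀)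
    (ht : t ∈ Ioo 0 t₀) : maxSet f φ (x₀ + (t - t₀) * deriv f c) t = {c} := by
  refine eq_singleton_iff_unique_mem.mpr ⟨fun v => ?_, fun w hw => ?_⟩
  · rcases eq_or_ne v c with rfl | hv
    · exact le_rfl
    · exact (eFun_lt_of_mem_maxSet hf hconv hpos hφ hc ht hv).le
  · by_contra hwc
    exact (hw c).not_gt (eFun_lt_of_mem_maxSet hf hconv hpos hφ hc ht hwc)

theorem mem_maxSet_of_forall_mem_maxSet (hf : ContDiff ℝ 2 f)
    (hconv : ∀ u, 0 ≤ deriv (deriv f) u) (hφ : ∀ a b, IntervalIntegrable φ volume a b)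
    {x₀ t₀ c : ℝ} (ht₀ : 0 < t₀)
    (h : ∀ t ∈ Ioo 0 t₀, c ∈ maxSet f φ (x₀ + (t - t₀) * deriv f c) t) :
    c ∈ maxSet f φ x₀ t₀ := by
  intro v
  set y₀ := x₀ - t₀ * deriv f c
  set G : ℝ → ℝ := fun t => -(∫ y in y₀..(y₀ - t * (deriv f v - deriv f c)), φ y)
    - t * ∫ s in c..v, deriv (deriv f) s * s
  have hG : Continuous G := by
    have := intervalIntegral.continuous_primitive hφ y₀
    fun_prop
  have hGeq : ∀ t, 0 < t → eFun f φ v (x₀ + (t - t₀) * deriv f c) t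
      - eFun f φ c (x₀ + (t - t₀) * deriv f c) t = G t := by
    intro t ht
    rw [eFun_sub_eFun hf hconv hφ ht, intervalIntegral.integral_symm,
      show x₀ + (t - t₀) * deriv f c - t * deriv f c = y₀ by ring,
      show x₀ + (t - t₀) * deriv f c - t * deriv f v = y₀ - t * (deriv f v - deriv f c) by ring]
  have hGle : ∀ᶠ t in 𝓝[<] t₀, G t ≤ 0 := by
    filter_upwards [Ioo_mem_nhdsLT ht₀] with t ht
    linarith [hGeq t ht.1, h t ht v]
  have hGt₀ : G t₀ ≤ 0 := le_of_tendsto (hG.tendsto t₀ |>.mono_left nhdsWithin_le_nhds) hGle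
  have hGt₀eq := hGeq t₀ ht₀
  rw [sub_self, zero_mul, add_zero] at hGt₀eq
  linarith

end LaxOleinik

/-- maximizers correspond exactly to shock-free backward characteristics. -/
theorem stmt6_maximizer_iff_shock_free
    (f φ : ℝ → ℝ) (M : ℝ)
    (hf : ContDiff ℝ 2 f)
    (hconv : ∀ u : ℝ, 0 ≤ deriv (deriv f) u)
    (hdeg : volume {u : ℝ | deriv (deriv f) u = 0} = 0)
    (hφmeas : Measurable φ)
    (hφbdd : ∀ x : ℝ, |φ x| ≤ M) :
    ∀ x₀ t₀ : ℝ, 0 < t₀ → ∀ c : ℝ,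
      c ∈ maxSet f φ x₀ t₀ ↔
        ∀ t ∈ Set.Ioo (0:ℝ) t₀, maxSet f φ (x₀ + (t - t₀) * deriv f c) t = {c} := by
  intro x₀ t₀ ht₀ c
  have hφ : ∀ a b, IntervalIntegrable φ volume a b := fun a b =>
    intervalIntegrable_const.mono_fun' hφmeas.aestronglyMeasurable (ae_of_all _ hφbdd)
  have hpos : ∀ᵐ u, 0 < deriv (deriv f) u := by
    filter_upwards [measure_eq_zero_iff_ae_notMem.mp hdeg] with u hu
    exact (hconv u).lt_of_ne' hu
  exact ⟨fun hc t ht => maxSet_eq_singleton_of_mem_maxSet hf hconv hpos hφ hc ht,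
    fun h => mem_maxSet_of_forall_mem_maxSet hf hconv hφ ht₀ fun t ht => (h t ht).symm ▸ rfl⟩
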